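/- arXiv:2501.09245 — 2 statements merged into one kernel-verified Lean document; each statement's English description precedes it below -/
import Mathlib

section
/- The minimum ℓ¹-norm of a nonzero vector in the lattice (1/2)D_4^+ equals 1, and the number of vectors of ℓ¹-norm exactly 1 in (1/2)D_4^+ equals 40. -/
def l1 {n : ℕ} (x : Fin n → ℝ) : ℝ := ∑ i, |x i|

/-- `D_4`: integer vectors with even coordinate sum. -/
def D4 : Set (Fin 4 → ℝ) :=
  {x | ∃ v : Fin 4 → ℤ, (∀ i, x i = (v i : ℝ)) ∧ 2 ∣ ∑ i, v i}

/-- `D_4^+ = D_4 ∪ (D_4 + (1/2,1/2,1/2,1/2))`. -/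
def D4Plus : Set (Fin 4 → ℝ) :=
  D4 ∪ {x | ∃ y ∈ D4, x = y + fun _ => (1/2 : ℝ)}

/-- The lattice `(1/2) D_4^+`. -/
def halfD4Plus : Set (Fin 4 → ℝ) := {x | ∃ y ∈ D4Plus, x = (1/2 : ℝ) • y}

lemma mem_half (x : Fin 4 → ℝ) : x ∈ halfD4Plus ↔
    ∃ w : Fin 4 → ℤ, (∀ i, x i = (w i : ℝ)/4) ∧
      ((∀ i, w i % 2 = 0) ∨ (∀ i, w i % 2 = 1)) ∧
      (4 : ℤ) ∣ (w 0 + w 1 + w 2 + w 3) := by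
  constructor
  · rintro ⟨y, hy, rfl⟩
    rcases hy with ⟨v, hv, hsum⟩ | ⟨y', ⟨v, hv, hsum⟩, rfl⟩
    · refine ⟨fun i => 2 * v i, fun i => ?_, Or.inl fun i => by show 2 * v i % 2 = 0; omega, ?_⟩
      · simp [hv i]; ring
      · show (4:ℤ) ∣ 2 * v 0 + 2 * v 1 + 2 * v 2 + 2 * v 3
        rw [Fin.sum_univ_four] at hsum; omega
    · refine ⟨fun i => 2 * v i + 1, fun i => ?_, Or.inr fun i => by show (2 * v i + 1) % 2 = 1; omega, ?_⟩
      · simp [hv i]; ring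
      · show (4:ℤ) ∣ (2 * v 0 + 1) + (2 * v 1 + 1) + (2 * v 2 + 1) + (2 * v 3 + 1)
        rw [Fin.sum_univ_four] at hsum; omega
  · rintro ⟨w, hw, hpar | hpar, hdvd⟩
    · have h2 : ∀ i, 2 * (w i / 2) = w i := fun i => by have := hpar i; omega
      refine ⟨fun i => ((w i / 2 : ℤ) : ℝ), Or.inl ⟨fun i => w i / 2, fun i => rfl, ?_⟩, ?_⟩
      · rw [Fin.sum_univ_four]
        have := h2 0; have := h2 1; have := h2 2; have := h2 3; omega
      · funext i
        have : ((w i : ℝ)) = 2 * ((w i / 2 : ℤ) : ℝ) := by exact_mod_cast (h2 i).symm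
        rw [hw i, this]; simp; ring
    · have h2 : ∀ i, 2 * ((w i - 1) / 2) + 1 = w i := fun i => by have := hpar i; omega
      refine ⟨(fun i => (((w i - 1) / 2 : ℤ) : ℝ)) + fun _ => (1/2 : ℝ),
        Or.inr ⟨_, ⟨fun i => (w i - 1) / 2, fun i => rfl, ?_⟩, rfl⟩, ?_⟩
      · rw [Fin.sum_univ_four]
        have := h2 0; have := h2 1; have := h2 2; have := h2 3; omega
      · funext i
        have : ((w i : ℝ)) = 2 * (((w i - 1) / 2 : ℤ) : ℝ) + 1 := by exact_mod_cast (h2 i).symm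
        rw [hw i, this]; simp [Pi.add_apply]; ring

lemma l1_eq (w : Fin 4 → ℤ) (x : Fin 4 → ℝ) (h : ∀ i, x i = (w i : ℝ)/4) :
    l1 x = (((w 0).natAbs + (w 1).natAbs + (w 2).natAbs + (w 3).natAbs : ℕ) : ℝ)/4 := by
  have habs : ∀ i, |x i| = (((w i).natAbs : ℕ) : ℝ)/4 := by
    intro i
    rw [h i, abs_div, abs_of_pos (by norm_num : (0:ℝ) < 4), Nat.cast_natAbs, Int.cast_abs]
  simp only [l1, Fin.sum_univ_four, habs]
  push_cast
  ring

noncomputable def gmap : (Fin 4 → ℤ) → (Fin 4 → ℝ) := fun w i => (w i : ℝ)/4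

noncomputable def Wfin : Finset (Fin 4 → ℤ) :=
  (Fintype.piFinset fun _ => Finset.Icc (-4 : ℤ) 4).filter
    (fun w => ((∀ i, w i % 2 = 0) ∨ (∀ i, w i % 2 = 1)) ∧
      (4 : ℤ) ∣ (w 0 + w 1 + w 2 + w 3) ∧
      (w 0).natAbs + (w 1).natAbs + (w 2).natAbs + (w 3).natAbs = 4)

lemma gmap_inj : Function.Injective gmap := by
  intro a b h
  funext i
  have := congrFun h i
  simp only [gmap] at this
  field_simp at this
  exact_mod_cast this

lemma set_eq : {x ∈ halfD4Plus | l1 x = 1} = gmap '' ↑Wfin := by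
  ext x
  constructor
  · rintro ⟨hx, hl⟩
    obtain ⟨w, hw, hpar, hdvd⟩ := (mem_half x).1 hx
    rw [l1_eq w x hw] at hl
    have hsum : (w 0).natAbs + (w 1).natAbs + (w 2).natAbs + (w 3).natAbs = 4 := by
      have : (((w 0).natAbs + (w 1).natAbs + (w 2).natAbs + (w 3).natAbs : ℕ) : ℝ) = 4 := by
        linarith
      exact_mod_cast this
    refine ⟨w, ?_, ?_⟩
    · rw [Wfin, Finset.mem_coe, Finset.mem_filter]
      refine ⟨?_, hpar, hdvd, hsum⟩
      rw [Fintype.mem_piFinset]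
      intro i
      rw [Finset.mem_Icc]
      have : (w i).natAbs ≤ 4 := by
        fin_cases i
        · show (w 0).natAbs ≤ 4; omega
        · show (w 1).natAbs ≤ 4; omega
        · show (w 2).natAbs ≤ 4; omega
        · show (w 3).natAbs ≤ 4; omega
      omega
    · funext i; exact (hw i).symm
  · rintro ⟨w, hw, rfl⟩
    rw [Wfin, Finset.mem_coe, Finset.mem_filter, Fintype.mem_piFinset] at hw
    obtain ⟨hbd, hpar, hdvd, hsum⟩ := hw
    refine ⟨(mem_half _).2 ⟨w, fun i => rfl, hpar, hdvd⟩, ?_⟩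
    have hl := l1_eq w (gmap w) (fun i => rfl)
    rw [hl, hsum]
    norm_num

set_option maxRecDepth 100000 in
set_option maxHeartbeats 2000000 in
lemma Wfin_card : Wfin.card = 40 := by decide

theorem stmt1 :
    IsLeast {r : ℝ | ∃ x ∈ halfD4Plus, x ≠ 0 ∧ l1 x = r} 1 ∧
    Set.ncard {x ∈ halfD4Plus | l1 x = 1} = 40 := by
  constructor
  · constructor
    · refine ⟨gmap ![4, 0, 0, 0], ?_, ?_, ?_⟩
      · exact (mem_half _).2 ⟨![4, 0, 0, 0], fun i => rfl,
          Or.inl (by decide), by decide⟩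
      · intro h
        have := congrFun h 0
        simp [gmap] at this
      · have hl := l1_eq ![4,0,0,0] (gmap ![4,0,0,0]) (fun i => rfl)
        have h4 : ((![4,0,0,0] : Fin 4 → ℤ) 0).natAbs + ((![4,0,0,0] : Fin 4 → ℤ) 1).natAbs
            + ((![4,0,0,0] : Fin 4 → ℤ) 2).natAbs + ((![4,0,0,0] : Fin 4 → ℤ) 3).natAbs = 4 := rfl
        rw [hl, h4]
        norm_num
    · rintro r ⟨x, hx, hne, rfl⟩
      obtain ⟨w, hw, hpar, hdvd⟩ := (mem_half x).1 hx
      rw [l1_eq w x hw]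
      have hw0 : ¬(w 0 = 0 ∧ w 1 = 0 ∧ w 2 = 0 ∧ w 3 = 0) := by
        rintro ⟨h0, h1, h2, h3⟩
        apply hne
        funext i
        fin_cases i
        · show x 0 = 0; rw [hw 0, h0]; norm_num
        · show x 1 = 0; rw [hw 1, h1]; norm_num
        · show x 2 = 0; rw [hw 2, h2]; norm_num
        · show x 3 = 0; rw [hw 3, h3]; norm_num
      have hge : 4 ≤ (w 0).natAbs + (w 1).natAbs + (w 2).natAbs + (w 3).natAbs := by
        rcases hpar with h | h
        · have := h 0; have := h 1; have := h 2; have := h 3; omega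
        · have := h 0; have := h 1; have := h 2; have := h 3; omega
      have : (4 : ℝ) ≤ (((w 0).natAbs + (w 1).natAbs + (w 2).natAbs + (w 3).natAbs : ℕ) : ℝ) := by
        exact_mod_cast hge
      linarith
  · rw [set_eq, Set.ncard_image_of_injective _ gmap_inj, Set.ncard_coe_finset]
    exact Wfin_card
end

section
/- Blichfeldt's inequality: Let X ⊂ ℝ^n be a finite set with ‖x − x'‖₂² ≥ 1/n for all distinct x, x' ∈ X. Then for every y ∈ ℝ^n, Σ_{x∈X} δ(‖y − x‖₂) ≤ 1, where δ(r) = max(0, 1 − 2n r²). -/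
open Finset

theorem stmt17 (n : ℕ) (X : Finset (EuclideanSpace ℝ (Fin n)))
    (h : ∀ x ∈ X, ∀ y ∈ X, x ≠ y → (1 : ℝ)/n ≤ ‖x - y‖^2) :
    ∀ y : EuclideanSpace ℝ (Fin n),
      ∑ x ∈ X, max 0 (1 - 2 * n * ‖y - x‖^2) ≤ 1 := by
  intro y
  classical
  rcases Nat.eq_zero_or_pos n with hn | hn
  · subst hn
    have hsub : X.card ≤ 1 := Finset.card_le_one.2 (fun a _ b _ => Subsingleton.elim a b)
    calc ∑ x ∈ X, max 0 (1 - 2 * (0:ℕ) * ‖y - x‖^2) = ∑ x ∈ X, (1:ℝ) := by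
          refine Finset.sum_congr rfl fun x _ => ?_
          norm_num
      _ = X.card := by simp
      _ ≤ 1 := by exact_mod_cast hsub
  have hn0 : (0:ℝ) < n := by exact_mod_cast hn
  set S := X.filter (fun x => 2 * (n:ℝ) * ‖y - x‖^2 < 1) with hSdef
  have hsum1 : ∑ x ∈ X, max 0 (1 - 2 * n * ‖y - x‖^2)
      = ∑ x ∈ S, max 0 (1 - 2 * n * ‖y - x‖^2) := by
    refine (Finset.sum_subset (Finset.filter_subset _ X) ?_).symm
    intro x hx hxS
    have hc : ¬ (2 * (n:ℝ) * ‖y - x‖^2 < 1) := fun hc => hxS (Finset.mem_filter.2 ⟨hx, hc⟩)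
    push_neg at hc
    rw [max_eq_left]; linarith
  have hsum2 : ∑ x ∈ S, max 0 (1 - 2 * n * ‖y - x‖^2)
      = ∑ x ∈ S, (1 - 2 * n * ‖y - x‖^2) := by
    refine Finset.sum_congr rfl fun x hx => ?_
    have := (Finset.mem_filter.1 hx).2
    rw [max_eq_right]; linarith
  rw [hsum1, hsum2]
  rcases Finset.eq_empty_or_nonempty S with hS | hS
  · simp [hS]
  have hm0 : 0 < S.card := Finset.card_pos.2 hS
  have hm0' : (0:ℝ) < S.card := by exact_mod_cast hm0
  -- expand squared norms
  have expand : ∀ x x' : EuclideanSpace ℝ (Fin n),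
      ‖x - x'‖^2 = ‖y - x‖^2 + ‖y - x'‖^2 - 2 * (inner ℝ (y - x) (y - x') : ℝ) := by
    intro x x'
    have hxy : x - x' = (y - x') - (y - x) := by abel
    rw [hxy, norm_sub_sq_real, real_inner_comm]
    ring
  have hinner : ∑ x ∈ S, ∑ x' ∈ S, (inner ℝ (y - x) (y - x') : ℝ)
      = ‖∑ x ∈ S, (y - x)‖^2 := by
    rw [← real_inner_self_eq_norm_sq, sum_inner]
    exact Finset.sum_congr rfl fun x _ => (inner_sum S (fun x' => y - x') (y - x)).symm
  have hident : ∑ x ∈ S, ∑ x' ∈ S, ‖x - x'‖^2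
      = 2 * S.card * (∑ x ∈ S, ‖y - x‖^2) - 2 * ‖∑ x ∈ S, (y - x)‖^2 := by
    calc ∑ x ∈ S, ∑ x' ∈ S, ‖x - x'‖^2
        = ∑ x ∈ S, ∑ x' ∈ S, (‖y - x‖^2 + ‖y - x'‖^2 - 2 * (inner ℝ (y - x) (y - x') : ℝ)) :=
          Finset.sum_congr rfl fun x _ => Finset.sum_congr rfl fun x' _ => expand x x'
      _ = (∑ x ∈ S, ∑ _x' ∈ S, ‖y - x‖^2) + (∑ _x ∈ S, ∑ x' ∈ S, ‖y - x'‖^2)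
            - 2 * ∑ x ∈ S, ∑ x' ∈ S, (inner ℝ (y - x) (y - x') : ℝ) := by
          rw [Finset.mul_sum]
          rw [← Finset.sum_add_distrib, ← Finset.sum_sub_distrib]
          refine Finset.sum_congr rfl fun x _ => ?_
          rw [Finset.mul_sum]
          rw [← Finset.sum_add_distrib, ← Finset.sum_sub_distrib]
      _ = 2 * S.card * (∑ x ∈ S, ‖y - x‖^2) - 2 * ‖∑ x ∈ S, (y - x)‖^2 := by
          rw [hinner]
          simp only [Finset.sum_const, nsmul_eq_mul]
          rw [← Finset.mul_sum]
          ring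
  have key : ∑ x ∈ S, ∑ x' ∈ S, ‖x - x'‖^2 ≤ 2 * S.card * (∑ x ∈ S, ‖y - x‖^2) := by
    rw [hident]
    have : (0:ℝ) ≤ ‖∑ x ∈ S, (y - x)‖^2 := sq_nonneg _
    linarith
  have lb : (S.card : ℝ) * ((S.card : ℝ) - 1) / n ≤ ∑ x ∈ S, ∑ x' ∈ S, ‖x - x'‖^2 := by
    have step : ∀ x ∈ S, ((S.card:ℝ) - 1) / n ≤ ∑ x' ∈ S, ‖x - x'‖^2 := by
      intro x hx
      have hxX : x ∈ X := (Finset.mem_filter.1 hx).1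
      calc ((S.card:ℝ) - 1) / n = ∑ _x' ∈ S.erase x, (1:ℝ)/n := by
            rw [Finset.sum_const, Finset.card_erase_of_mem hx, nsmul_eq_mul]
            rw [Nat.cast_sub hm0]
            push_cast
            ring
        _ ≤ ∑ x' ∈ S.erase x, ‖x - x'‖^2 := by
            refine Finset.sum_le_sum fun x' hx' => ?_
            have hne : x' ≠ x := Finset.ne_of_mem_erase hx'
            have hx'X : x' ∈ X := (Finset.mem_filter.1 (Finset.mem_of_mem_erase hx')).1
            exact h x hxX x' hx'X (Ne.symm hne)
        _ ≤ ∑ x' ∈ S, ‖x - x'‖^2 :=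
            Finset.sum_le_sum_of_subset_of_nonneg (Finset.erase_subset _ _)
              (fun i _ _ => sq_nonneg _)
    calc (S.card : ℝ) * ((S.card : ℝ) - 1) / n
        = ∑ _x ∈ S, ((S.card:ℝ) - 1) / n := by
          rw [Finset.sum_const, nsmul_eq_mul]; ring
      _ ≤ ∑ x ∈ S, ∑ x' ∈ S, ‖x - x'‖^2 := Finset.sum_le_sum step
  have hmain : (S.card : ℝ) * ((S.card : ℝ) - 1) / n ≤ 2 * S.card * (∑ x ∈ S, ‖y - x‖^2) :=
    le_trans lb key
  have hfinal : ∑ x ∈ S, (1 - 2 * (n:ℝ) * ‖y - x‖^2)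
      = (S.card : ℝ) - 2 * n * ∑ x ∈ S, ‖y - x‖^2 := by
    rw [Finset.sum_sub_distrib, Finset.sum_const, nsmul_eq_mul, mul_one, ← Finset.mul_sum]
  rw [hfinal]
  have hdiv : (S.card : ℝ) * ((S.card : ℝ) - 1) ≤ 2 * S.card * (n * ∑ x ∈ S, ‖y - x‖^2) := by
    rw [div_le_iff₀ hn0] at hmain
    nlinarith [hmain]
  nlinarith [hdiv, hm0']
end
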